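/- Let X be a finite T0 topological space with specialization order ⪯, and let b₁, b₂, b₃, b₄ ∈ X be pairwise distinct points such that, in X, b₁ ⋖ b₃, b₂ ⋖ b₃ and b₃ ⋖ b₄ (covering relations). Let L := {x ∈ X | ∃ i, j ∈ {1,2,3,4}, b_i ⪯ x ⪯ b_j}, endowed with the subspace topology. Then the map π : L → X₄ defined by π(b_i) = i for i = 1, 2, 3, 4 and π(x) = 3 for every x ∈ L \ {b₁, b₂, b₃, b₄} is continuous. -/

import Mathlib

/-- The specialisation order of a topological space: `x ⪯ y` iff `x ∈ closure {y}`. -/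
def specLE {X : Type*} [TopologicalSpace X] (x y : X) : Prop := x ∈ closure ({y} : Set X)

/-- Strict specialisation: `x ≺ y`. -/
def specLT {X : Type*} [TopologicalSpace X] (x y : X) : Prop := specLE x y ∧ x ≠ y

/-- The covering relation of the specialisation order: `x ⋖ y`. -/
def specCov {X : Type*} [TopologicalSpace X] (x y : X) : Prop :=
  specLT x y ∧ ¬ ∃ z, specLT x z ∧ specLT z y

/-- The space `X₄`: four points (indexed by `Fin 4`, with `i : Fin 4` denoting the point
`i + 1` of `{1, 2, 3, 4}`), with the Alexandrov topology of the order generated by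
`1 ≺ 3`, `2 ≺ 3`, `3 ≺ 4`; its open sets are the up-sets of this order, i.e. the topology
generated by the principal up-sets `{4}`, `{3,4}`, `{1,3,4}`, `{2,3,4}`. -/
def topX4 : TopologicalSpace (Fin 4) :=
  TopologicalSpace.generateFrom {{3}, {2, 3}, {0, 2, 3}, {1, 2, 3}}

/-!
A map out of a finite, hence Alexandrov-discrete, space is continuous as soon as it preserves
specialisation, so it suffices that `π` is monotone into `X₄`, ordered by `1, 2 ≺ 3 ≺ 4`. This
comes down to `b₄` being maximal and `b₁`, `b₂` being minimal in `L`. Every point of `L` lies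
below some `b_j ⪯ b₄`, and above some `b_i`; and `b_i ⪯ b₁` forces `i = 1`, since `b₂ ≺ b₁`
would contradict `b₂ ⋖ b₃`, while `b₃` and `b₄` lie strictly above `b₁`.
-/

open Set Topology TopologicalSpace Filter Specialization

lemma range_fin_four {α : Type*} (b : Fin 4 → α) : range b = {b 0, b 1, b 2, b 3} := by
  ext x
  simp [Fin.exists_fin_succ, eq_comm]

section Order

variable {α : Type*} [PartialOrder α]

lemma Minimal.minimal_mem_upperClosure {s : Set α} {m : α} (hm : Minimal (· ∈ s) m) :
    Minimal (· ∈ upperClosure s) m := by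
  refine ⟨subset_upperClosure hm.1, fun x hx hxm => ?_⟩
  obtain ⟨a, ha, hax⟩ := mem_upperClosure.1 hx
  exact (hm.2 ha (hax.trans hxm)).trans hax

lemma Maximal.maximal_mem_lowerClosure {s : Set α} {m : α} (hm : Maximal (· ∈ s) m) :
    Maximal (· ∈ lowerClosure s) m := by
  refine ⟨subset_lowerClosure hm.1, fun x hx hmx => ?_⟩
  obtain ⟨a, ha, hxa⟩ := mem_lowerClosure.1 hx
  exact hxa.trans (hm.2 ha (hmx.trans hxa))

lemma minimal_mem_of_lt_of_covBy {a a' c d : α} (hac : a < c) (ha'c : a' ⋖ c) (hcd : c ≤ d) :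
    Minimal (· ∈ ({a, a', c, d} : Set α)) a := by
  refine ⟨mem_insert a _, ?_⟩
  rintro y (rfl | rfl | rfl | rfl) hya
  · exact le_rfl
  · by_contra hay
    exact ha'c.2 (lt_of_le_not_ge hya hay) hac
  · exact absurd hac hya.not_gt
  · exact absurd (hac.trans_le (hcd.trans hya)) (lt_irrefl a)

lemma maximal_mem_of_le {a a' c d : α} (hac : a ≤ c) (ha'c : a' ≤ c) (hcd : c ≤ d) :
    Maximal (· ∈ ({a, a', c, d} : Set α)) d := by
  refine ⟨by simp, ?_⟩
  rintro y (rfl | rfl | rfl | rfl) _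
  exacts [hac.trans hcd, ha'c.trans hcd, hcd, le_rfl]

lemma maximal_three_mem_lowerClosure {b : Fin 4 → α} (h02 : b 0 ≤ b 2) (h12 : b 1 ≤ b 2)
    (h23 : b 2 ≤ b 3) : Maximal (· ∈ lowerClosure (range b)) (b 3) :=
  (range_fin_four b ▸ maximal_mem_of_le h02 h12 h23).maximal_mem_lowerClosure

lemma minimal_zero_mem_upperClosure {b : Fin 4 → α} (h02 : b 0 < b 2) (h12 : b 1 ⋖ b 2)
    (h23 : b 2 ≤ b 3) : Minimal (· ∈ upperClosure (range b)) (b 0) :=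
  (range_fin_four b ▸ minimal_mem_of_lt_of_covBy h02 h12 h23).minimal_mem_upperClosure

lemma minimal_one_mem_upperClosure {b : Fin 4 → α} (h02 : b 0 ⋖ b 2) (h12 : b 1 < b 2)
    (h23 : b 2 ≤ b 3) : Minimal (· ∈ upperClosure (range b)) (b 1) := by
  rw [range_fin_four, insert_comm]
  exact (minimal_mem_of_lt_of_covBy h12 h02 h23).minimal_mem_upperClosure

end Order

section Topology

variable {X Y : Type*} [TopologicalSpace X]

lemma continuous_of_forall_specializes [AlexandrovDiscrete X] [TopologicalSpace Y] {f : X → Y}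
    (hf : ∀ x y, x ⤳ y → f x ⤳ f y) : Continuous f :=
  continuous_def.2 fun _ hs =>
    isOpen_iff_forall_specializes.2 fun x y hxy hy => (hf x y hxy).mem_open hs hy

lemma specializes_generateFrom_iff {g : Set (Set Y)} {x y : Y} :
    @Specializes Y (generateFrom g) x y ↔ ∀ s ∈ g, y ∈ s → x ∈ s := by
  let := generateFrom g
  rw [Specializes, nhds_generateFrom (a := y)]
  simp only [le_iInf_iff, le_principal_iff, mem_ofPred_eq, and_imp]
  refine forall_congr' fun s => ⟨fun h hs hy => mem_of_mem_nhds (h hy hs), fun h hy hs => ?_⟩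
  exact (isOpen_generateFrom_of_mem hs).mem_nhds (h hs hy)

/-- `i ⤳ j` means `j ⪯ i` for the order `0, 1 < 2 < 3` of `X₄`. -/
lemma topX4_specializes_iff {i j : Fin 4} :
    @Specializes _ topX4 i j ↔ (j = 3 → i = 3) ∧ (i = 0 → j = 0) ∧ (i = 1 → j = 1) := by
  unfold topX4
  rw [specializes_generateFrom_iff]
  simp only [mem_insert_iff, mem_singleton_iff, forall_eq_or_imp, forall_eq]
  revert i j
  decide

lemma specLE_iff_le {x y : X} : specLE x y ↔ toEquiv x ≤ toEquiv y :=
  specializes_iff_mem_closure.symm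

lemma specLT_iff_lt [T0Space X] {x y : X} : specLT x y ↔ toEquiv x < toEquiv y := by
  rw [specLT, specLE_iff_le, lt_iff_le_and_ne, toEquiv.injective.ne_iff]

lemma specCov_iff_covBy [T0Space X] {x y : X} : specCov x y ↔ toEquiv x ⋖ toEquiv y := by
  simp only [specCov, specLT_iff_lt, not_exists, not_and]
  rfl

end Topology

lemma apply_eq_iff_val_eq_of_ne {X ι : Type*} {L : Set X} {b : ι → X} {π : L → ι} {c k : ι}
    (hπb : ∀ (i : ι) (h : b i ∈ L), π ⟨b i, h⟩ = i)
    (hπ : ∀ (x : X) (h : x ∈ L), (∀ i, x ≠ b i) → π ⟨x, h⟩ = c) (hk : k ≠ c) (x : L) :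
    π x = k ↔ x.1 = b k := by
  obtain ⟨x, hx⟩ := x
  refine ⟨fun hxk => ?_, fun (hxk : x = b k) => hxk ▸ hπb k (hxk ▸ hx)⟩
  by_cases hxb : ∃ i, x = b i
  · obtain ⟨i, rfl⟩ := hxb
    rw [← hxk, hπb]
  · exact absurd ((hπ x hx (by simpa using hxb)).symm.trans hxk) hk.symm

theorem stmt9_general {X : Type*} [tX : TopologicalSpace X] [Finite X] [T0Space X]
    (b : Fin 4 → X)
    (h13 : specCov (b 0) (b 2)) (h23 : specCov (b 1) (b 2)) (h34 : specCov (b 2) (b 3))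
    (L : Set X) (hL : L = {x | ∃ i j : Fin 4, specLE (b i) x ∧ specLE x (b j)})
    (π : L → Fin 4)
    (hπb : ∀ (i : Fin 4) (h : b i ∈ L), π ⟨b i, h⟩ = i)
    (hπ : ∀ (x : X) (h : x ∈ L), (∀ i : Fin 4, x ≠ b i) → π ⟨x, h⟩ = 2) :
    @Continuous L (Fin 4) _ topX4 π := by
  have hcov02 := specCov_iff_covBy.1 h13
  have hcov12 := specCov_iff_covBy.1 h23
  have hle23 := (specCov_iff_covBy.1 h34).le
  have hbounds (x : L) : toEquiv x.1 ∈ upperClosure (range (toEquiv ∘ b)) ∧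
      toEquiv x.1 ∈ lowerClosure (range (toEquiv ∘ b)) := by
    obtain ⟨i, j, hi, hj⟩ : ∃ i j, specLE (b i) x ∧ specLE x.1 (b j) := hL ▸ x.2
    exact ⟨mem_upperClosure.2 ⟨_, mem_range_self i, specLE_iff_le.1 hi⟩,
      mem_lowerClosure.2 ⟨_, mem_range_self j, specLE_iff_le.1 hj⟩⟩
  have hπ_eq {k : Fin 4} (hk : k ≠ 2) := apply_eq_iff_val_eq_of_ne hπb hπ hk
  refine @continuous_of_forall_specializes L (Fin 4) _ _ topX4 π fun x y hxy => ?_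
  have hyx : toEquiv y.1 ≤ toEquiv x.1 := hxy.map continuous_subtype_val
  simp only [topX4_specializes_iff, hπ_eq (k := 0) (by decide), hπ_eq (k := 1) (by decide),
    hπ_eq (k := 3) (by decide)]
  refine ⟨fun hy => ?_, fun hx => ?_, fun hx => ?_⟩
  · exact (maximal_three_mem_lowerClosure hcov02.le hcov12.le hle23).eq_of_ge (hbounds x).2
      (hy ▸ hyx)
  · exact (minimal_zero_mem_upperClosure hcov02.lt hcov12 hle23).eq_of_le (hbounds y).1 (hx ▸ hyx)
  · exact (minimal_one_mem_upperClosure hcov02 hcov12.lt hle23).eq_of_le (hbounds y).1 (hx ▸ hyx)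

/-- If `b₁, b₂, b₃, b₄` (here `b 0, b 1, b 2, b 3`) are pairwise distinct points of a finite
T0-space with `b₁ ⋖ b₃`, `b₂ ⋖ b₃`, `b₃ ⋖ b₄`, and `L` is the locally closed hull of
`{b₁, b₂, b₃, b₄}`, then the map `π : L → X₄` sending each `b_i` to `i` and every other
point to `3` (here: index `2`) is continuous. -/
theorem stmt9 {X : Type*} [tX : TopologicalSpace X] [Finite X] [T0Space X]
    (b : Fin 4 → X) (hb : Function.Injective b)
    (h13 : specCov (b 0) (b 2)) (h23 : specCov (b 1) (b 2)) (h34 : specCov (b 2) (b 3))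
    (L : Set X) (hL : L = {x | ∃ i j : Fin 4, specLE (b i) x ∧ specLE x (b j)})
    (π : L → Fin 4)
    (hπb : ∀ (i : Fin 4) (h : b i ∈ L), π ⟨b i, h⟩ = i)
    (hπ : ∀ (x : X) (h : x ∈ L), (∀ i : Fin 4, x ≠ b i) → π ⟨x, h⟩ = 2) :
    @Continuous L (Fin 4) _ topX4 π :=
  stmt9_general (tX := tX) b h13 h23 h34 L hL π hπb hπ
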